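/- arXiv:math/0701273 — 2 statements merged into one kernel-verified Lean document; each statement's English description precedes it below -/
import Mathlib

section
/- Let Σ be a smooth rank-k horizontal distribution on an open set U ⊆ ℝ^m. For every point p ∈ U and every vector v ∈ Σ_p there exist ε > 0 and a smooth nonholonomic geodesic γ : (−ε, ε) → U with γ(0) = p and γ'(0) = v; moreover the nonholonomic geodesic with these initial conditions is unique, in the sense that any two nonholonomic geodesics with the same initial point and the same initial velocity coincide on the intersection of their domains. -/
open Set MeasureTheory
open scoped RealInnerProductSpace ENNReal

/-- A smooth rank-`k` horizontal distribution `Σ` on an open set `U ⊆ ℝ^m`, described by the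
field of orthogonal projections `P p` of `ℝ^m` onto the subspace `Σ_p`. -/
structure HorDistrib (m k : ℕ) where
  U : Set (EuclideanSpace ℝ (Fin m))
  isOpen_U : IsOpen U
  one_le_k : 1 ≤ k
  k_lt_m : k < m
  P : EuclideanSpace ℝ (Fin m) → EuclideanSpace ℝ (Fin m) →L[ℝ] EuclideanSpace ℝ (Fin m)
  smooth_P : ContDiffOn ℝ (⊤ : ℕ∞) P U
  idem : ∀ p ∈ U, ∀ v, P p (P p v) = P p v
  selfAdjoint : ∀ p ∈ U, ∀ v w, ⟪P p v, w⟫ = ⟪v, P p w⟫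
  rank : ∀ p ∈ U, Module.finrank ℝ (LinearMap.range (P p).toLinearMap) = k

variable {m k : ℕ}

/-- The plane `Σ_p` of the distribution at `p`, as a subset of `ℝ^m`. -/
def HorDistrib.sigmaAt (D : HorDistrib m k) (p : EuclideanSpace ℝ (Fin m)) :
    Set (EuclideanSpace ℝ (Fin m)) := {v | D.P p v = v}

/-- `γ` is a (smooth) nonholonomic geodesic on the open set `I ⊆ ℝ`:  it is horizontal
(`γ' s ∈ Σ_{γ s}`) and `P_{γ s} (γ'' s) = 0`. -/
def IsNhGeodesicOn (D : HorDistrib m k) (γ : ℝ → EuclideanSpace ℝ (Fin m)) (I : Set ℝ) : Prop :=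
  IsOpen I ∧ (∀ s ∈ I, γ s ∈ D.U) ∧ ContDiffOn ℝ (⊤ : ℕ∞) γ I ∧
  (∀ s ∈ I, D.P (γ s) (deriv γ s) = deriv γ s) ∧
  (∀ s ∈ I, D.P (γ s) (deriv (deriv γ) s) = 0)

/-- A nonholonomic geodesic segment, parametrized on the closed interval `[c,d]`. -/
def IsGeodesicSegment (D : HorDistrib m k) (δ : ℝ → EuclideanSpace ℝ (Fin m)) (c d : ℝ) :
    Prop :=
  c ≤ d ∧ (∀ s ∈ Icc c d, δ s ∈ D.U) ∧ ContDiffOn ℝ (⊤ : ℕ∞) δ (Icc c d) ∧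
  (c < d →
    (∀ s ∈ Icc c d, D.P (δ s) (derivWithin δ (Icc c d) s) = derivWithin δ (Icc c d) s) ∧
    (∀ s ∈ Icc c d, D.P (δ s) (derivWithin (derivWithin δ (Icc c d)) (Icc c d) s) = 0))

/-- The length of a smooth segment. -/
noncomputable def segLength (δ : ℝ → EuclideanSpace ℝ (Fin m)) (c d : ℝ) : ℝ :=
  ∫ s in c..d, ‖derivWithin δ (Icc c d) s‖

/-- A broken geodesic: a concatenation of finitely many nonholonomic geodesic segments,
with break points `t 0 ≤ t 1 ≤ ⋯ ≤ t n`. -/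
def IsBrokenGeodesic (D : HorDistrib m k) (γ : ℝ → EuclideanSpace ℝ (Fin m))
    (n : ℕ) (t : Fin (n + 1) → ℝ) : Prop :=
  Monotone t ∧ ∀ i : Fin n, IsGeodesicSegment D γ (t i.castSucc) (t i.succ)

/-- The length of a broken geodesic. -/
noncomputable def brokenLength (γ : ℝ → EuclideanSpace ℝ (Fin m)) (n : ℕ)
    (t : Fin (n + 1) → ℝ) : ℝ :=
  ∑ i : Fin n, segLength γ (t i.castSucc) (t i.succ)

/-- Two points are joined by a broken geodesic. -/
def JoinedByBrokenGeodesic (D : HorDistrib m k) (p q : EuclideanSpace ℝ (Fin m)) : Prop :=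
  ∃ (n : ℕ) (γ : ℝ → EuclideanSpace ℝ (Fin m)) (t : Fin (n + 1) → ℝ),
    IsBrokenGeodesic D γ n t ∧ γ (t 0) = p ∧ γ (t (Fin.last n)) = q

/-- The distance `d_H`: the infimum of the lengths of broken geodesics joining `p` to `q`. -/
noncomputable def dH (D : HorDistrib m k) (p q : EuclideanSpace ℝ (Fin m)) : ℝ≥0∞ :=
  sInf {L | ∃ (n : ℕ) (γ : ℝ → EuclideanSpace ℝ (Fin m)) (t : Fin (n + 1) → ℝ),
    IsBrokenGeodesic D γ n t ∧ γ (t 0) = p ∧ γ (t (Fin.last n)) = q ∧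
    L = ENNReal.ofReal (brokenLength γ n t)}

/-- `γ` is an absolutely continuous horizontal curve on `[c,d]` with a.e. derivative `g`. -/
def IsHorizontalAC (D : HorDistrib m k) (γ g : ℝ → EuclideanSpace ℝ (Fin m)) (c d : ℝ) :
    Prop :=
  c ≤ d ∧ IntegrableOn g (Icc c d) ∧
  (∀ s ∈ Icc c d, γ s = γ c + ∫ r in c..s, g r) ∧
  (∀ s ∈ Icc c d, γ s ∈ D.U) ∧
  (∀ᵐ s ∂(volume.restrict (Icc c d)), D.P (γ s) (g s) = g s)

/-- The Carnot–Carathéodory distance: the infimum of the lengths of absolutely continuous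
horizontal curves joining `p` to `q`. -/
noncomputable def dc (D : HorDistrib m k) (p q : EuclideanSpace ℝ (Fin m)) : ℝ≥0∞ :=
  sInf {L | ∃ (γ g : ℝ → EuclideanSpace ℝ (Fin m)) (c d : ℝ),
    IsHorizontalAC D γ g c d ∧ γ c = p ∧ γ d = q ∧
    L = ENNReal.ofReal (∫ s in c..d, ‖g s‖)}

/-- A (smooth) section of the distribution `Σ`. -/
def IsSection (D : HorDistrib m k) (V : EuclideanSpace ℝ (Fin m) → EuclideanSpace ℝ (Fin m)) :
    Prop :=
  ContDiffOn ℝ (⊤ : ℕ∞) V D.U ∧ ∀ p ∈ D.U, D.P p (V p) = V p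

/-- The Lie bracket of two vector fields on `ℝ^m`. -/
noncomputable def lieBracket (X Y : EuclideanSpace ℝ (Fin m) → EuclideanSpace ℝ (Fin m)) :
    EuclideanSpace ℝ (Fin m) → EuclideanSpace ℝ (Fin m) :=
  fun p => fderiv ℝ Y p (X p) - fderiv ℝ X p (Y p)

/-- `IsIterBracket D j V` :  `V` is an iterated Lie bracket of exactly `j` sections of `Σ`. -/
inductive IsIterBracket (D : HorDistrib m k) :
    ℕ → (EuclideanSpace ℝ (Fin m) → EuclideanSpace ℝ (Fin m)) → Prop
  | base : ∀ V, IsSection D V → IsIterBracket D 1 V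
  | bracket : ∀ (a b : ℕ) (X Y), IsIterBracket D a X → IsIterBracket D b Y →
      IsIterBracket D (a + b) (lieBracket X Y)

/-- `Σ_i(p)`: the span of the evaluations at `p` of all iterated Lie brackets of at most `i`
sections of `Σ`. -/
noncomputable def sigmaFlag (D : HorDistrib m k) (i : ℕ) (p : EuclideanSpace ℝ (Fin m)) :
    Submodule ℝ (EuclideanSpace ℝ (Fin m)) :=
  Submodule.span ℝ {v | ∃ j ≤ i, ∃ V, IsIterBracket D j V ∧ v = V p}

/-- `Σ` is bracket generating. -/
def BracketGenerating (D : HorDistrib m k) : Prop :=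
  ∀ p ∈ D.U, ∃ l, sigmaFlag D l p = ⊤

/-- `Σ` is regular at `p`, with degree `l` (the least `l` with `Σ_l(p) = ℝ^m`) :  the
dimensions of the flag `Σ_i`, `i ≤ l`, are constant near `p`. -/
def RegularAt (D : HorDistrib m k) (p : EuclideanSpace ℝ (Fin m)) (l : ℕ) : Prop :=
  sigmaFlag D l p = ⊤ ∧ (∀ i < l, sigmaFlag D i p ≠ ⊤) ∧
  ∃ W, IsOpen W ∧ p ∈ W ∧ W ⊆ D.U ∧
    ∀ i ≤ l, ∀ q ∈ W,
      Module.finrank ℝ (sigmaFlag D i q) = Module.finrank ℝ (sigmaFlag D i p)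

/-- `f` is nonholonomically geodesically convex on `Ω`: its restriction to any nonholonomic
geodesic contained in `Ω` is convex. -/
def NConvexOn (D : HorDistrib m k) (Ω : Set (EuclideanSpace ℝ (Fin m)))
    (f : EuclideanSpace ℝ (Fin m) → ℝ) : Prop :=
  ∀ (γ : ℝ → EuclideanSpace ℝ (Fin m)) (a b : ℝ), IsNhGeodesicOn D γ (Ioo a b) →
    (∀ s ∈ Ioo a b, γ s ∈ Ω) → ConvexOn ℝ (Ioo a b) (f ∘ γ)

/-- `Ω` is a nonholonomically geodesically convex set. -/
def NConvexSet (D : HorDistrib m k) (Ω : Set (EuclideanSpace ℝ (Fin m))) : Prop :=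
  ∀ (γ : ℝ → EuclideanSpace ℝ (Fin m)) (a b : ℝ), IsNhGeodesicOn D γ (Ioo a b) →
    ∀ s₁ ∈ Ioo a b, ∀ s₂ ∈ Ioo a b, γ s₁ ∈ Ω → γ s₂ ∈ Ω → ∀ s ∈ Icc s₁ s₂, γ s ∈ Ω

/-!
Differentiating `P_γ γ' = γ'` shows that a nonholonomic geodesic solves the smooth second-order
equation `γ'' = dP_γ[γ'] γ'`, so uniqueness is Picard–Lindelöf uniqueness, propagated along the
connected interval. Conversely, solve this equation with `γ(0) = p`, `γ'(0) = v`. Differentiating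
`P² = P` gives `P dP[u] P = 0`; hence `h = P_γ γ' - γ'` solves the linear equation
`h' = -P_γ dP_γ[γ'] h` with `h(0) = 0`, so `γ` stays horizontal, and then
`P_γ γ'' = P_γ dP_γ[γ'] P_γ γ' = 0`.
-/

open Filter Topology

section ODE

variable {X : Type*} [NormedAddCommGroup X] [NormedSpace ℝ X]

theorem ODE_solution_eqOn_of_isPreconnected {v : ℝ → X → X} {f g : ℝ → X} {J : Set ℝ}
    (hJo : IsOpen J) (hJc : IsPreconnected J)
    (hv : ∀ t ∈ J, ∃ (K : NNReal) (s : Set X), s ∈ 𝓝 (f t) ∧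
      ∀ᶠ t' in 𝓝 t, LipschitzOnWith K (v t') s)
    (hf : ∀ t ∈ J, HasDerivAt f (v t (f t)) t) (hg : ∀ t ∈ J, HasDerivAt g (v t (g t)) t)
    {t₀ : ℝ} (ht₀ : t₀ ∈ J) (h₀ : f t₀ = g t₀) : EqOn f g J := by
  have local_eq : ∀ t ∈ J, f t = g t → f =ᶠ[𝓝 t] g := by
    intro t ht heq
    obtain ⟨K, s, hs, hlip⟩ := hv t ht
    have hfs : ∀ᶠ t' in 𝓝 t, f t' ∈ s := (hf t ht).continuousAt.preimage_mem_nhds hs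
    have hgs : ∀ᶠ t' in 𝓝 t, g t' ∈ s :=
      (hg t ht).continuousAt.preimage_mem_nhds (heq ▸ hs)
    have hJt : ∀ᶠ t' in 𝓝 t, t' ∈ J := hJo.mem_nhds ht
    refine ODE_solution_unique_of_eventually (s := fun _ => s) hlip ?_ ?_ heq
    · filter_upwards [hfs, hJt] with t' h1 h2 using ⟨hf t' h2, h1⟩
    · filter_upwards [hgs, hJt] with t' h1 h2 using ⟨hg t' h2, h1⟩
  set u := {t | f =ᶠ[𝓝 t] g}
  have hu : J ⊆ u := by
    refine hJc.subset_of_closure_inter_subset (isOpen_setOfPred_eventually_nhds)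
      ⟨t₀, ht₀, local_eq t₀ ht₀ h₀⟩ ?_
    rintro t ⟨htu, ht⟩
    have : (𝓝[u] t).NeBot := mem_closure_iff_nhdsWithin_neBot.1 htu
    refine local_eq t ht (tendsto_nhds_unique_of_eventuallyEq (l := 𝓝[u] t)
      ((hf t ht).continuousAt.tendsto.mono_left nhdsWithin_le_nhds)
      ((hg t ht).continuousAt.tendsto.mono_left nhdsWithin_le_nhds)
      (eventually_nhdsWithin_of_forall fun _ ht' => EventuallyEq.eq_of_nhds ht'))
  exact fun t ht => (hu ht).eq_of_nhds

theorem linear_ODE_solution_eqOn_zero {A : ℝ → X →L[ℝ] X} {h : ℝ → X} {J : Set ℝ}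
    (hJo : IsOpen J) (hJc : IsPreconnected J) (hA : ContinuousOn A J)
    (hh : ∀ t ∈ J, HasDerivAt h (A t (h t)) t) {t₀ : ℝ} (ht₀ : t₀ ∈ J) (h₀ : h t₀ = 0) :
    EqOn h 0 J := by
  refine ODE_solution_eqOn_of_isPreconnected (v := fun t => A t) hJo hJc ?_ hh
    (fun t _ => by simp) ht₀ h₀
  intro t ht
  have hbound : ∀ᶠ t' in 𝓝 t, ‖A t'‖₊ < ‖A t‖₊ + 1 :=
    (hA.continuousAt (hJo.mem_nhds ht)).nnnorm.eventually_lt continuousAt_const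
      (lt_add_one _)
  refine ⟨‖A t‖₊ + 1, univ, univ_mem, ?_⟩
  filter_upwards [hbound] with t' ht'
  exact ((A t').lipschitz.weaken ht'.le).lipschitzOnWith

theorem ODE_solution_contDiffOn {F : X → X} {S : Set X} {z : ℝ → X} {I : Set ℝ}
    (hF : ContDiffOn ℝ (⊤ : ℕ∞) F S) (hI : IsOpen I) (hzS : MapsTo z I S)
    (hz : ∀ t ∈ I, HasDerivAt z (F (z t)) t) : ContDiffOn ℝ (⊤ : ℕ∞) z I := by
  have hderiv : EqOn (deriv z) (F ∘ z) I := fun t ht => (hz t ht).deriv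
  refine contDiffOn_infty.2 fun n => ?_
  induction n with
  | zero =>
    exact contDiffOn_zero.2 fun t ht => (hz t ht).continuousAt.continuousWithinAt
  | succ n ih =>
    rw [Nat.cast_succ, contDiffOn_succ_iff_deriv_of_isOpen hI]
    exact ⟨fun t ht => (hz t ht).differentiableAt.differentiableWithinAt, by simp,
      ((hF.of_le (by exact_mod_cast le_top)).comp ih hzS).congr hderiv⟩

end ODE

namespace HorDistrib

variable (D : HorDistrib m k)

local notation "E" => EuclideanSpace ℝ (Fin m)

theorem hasFDerivAt_P {q : E} (hq : q ∈ D.U) : HasFDerivAt D.P (fderiv ℝ D.P q) q :=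
  ((D.smooth_P.contDiffAt (D.isOpen_U.mem_nhds hq)).differentiableAt (by simp)).hasFDerivAt

theorem P_fderiv_P_eq_zero {q : E} (hq : q ∈ D.U) (u w : E) :
    D.P q (fderiv ℝ D.P q u (D.P q w)) = 0 := by
  have hP := D.hasFDerivAt_P hq
  have hPw : HasFDerivAt (fun x => D.P x w) ((fderiv ℝ D.P q).flip w) q := by
    simpa using hP.clm_apply (hasFDerivAt_const w q)
  have hPPw : HasFDerivAt (fun x => D.P x (D.P x w))
      ((D.P q).comp ((fderiv ℝ D.P q).flip w) + (fderiv ℝ D.P q).flip (D.P q w)) q :=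
    hP.clm_apply hPw
  have hidem : (fun x => D.P x (D.P x w)) =ᶠ[𝓝 q] fun x => D.P x w :=
    eventually_of_mem (D.isOpen_U.mem_nhds hq) fun x hx => D.idem x hx w
  have hdiff : D.P q (fderiv ℝ D.P q u w) + fderiv ℝ D.P q u (D.P q w) = fderiv ℝ D.P q u w := by
    simpa using congrArg (fun L : E →L[ℝ] E => L u)
      ((hPPw.congr_of_eventuallyEq hidem.symm).unique hPw)
  have := congrArg (D.P q) hdiff
  rwa [map_add, D.idem q hq, add_eq_left] at this

theorem contDiffOn_fderiv_P : ContDiffOn ℝ (⊤ : ℕ∞) (fderiv ℝ D.P) D.U :=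
  D.smooth_P.fderiv_of_isOpen D.isOpen_U (by simp)

noncomputable def geodesicField : E × E → E × E :=
  fun z => (z.2, fderiv ℝ D.P z.1 z.2 z.2)

theorem contDiffOn_geodesicField :
    ContDiffOn ℝ (⊤ : ℕ∞) D.geodesicField (D.U ×ˢ (univ : Set E)) := by
  refine contDiff_snd.contDiffOn.prodMk ?_
  exact ((D.contDiffOn_fderiv_P.comp contDiff_fst.contDiffOn fun z hz => hz.1).clm_apply
    contDiff_snd.contDiffOn).clm_apply contDiff_snd.contDiffOn

theorem contDiffAt_geodesicField {z : E × E} (hz : z.1 ∈ D.U) :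
    ContDiffAt ℝ 1 D.geodesicField z :=
  (D.contDiffOn_geodesicField.contDiffAt
    ((D.isOpen_U.prod isOpen_univ).mem_nhds ⟨hz, mem_univ _⟩)).of_le (by simp)

end HorDistrib

section Geodesics

variable {D : HorDistrib m k} {γ γ₁ γ₂ : ℝ → EuclideanSpace ℝ (Fin m)} {I J : Set ℝ}

theorem IsNhGeodesicOn.mono (hγ : IsNhGeodesicOn D γ I) (hJ : IsOpen J) (hJI : J ⊆ I) :
    IsNhGeodesicOn D γ J := by
  obtain ⟨-, hU, hsmooth, hhor, hgeo⟩ := hγ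
  exact ⟨hJ, fun s hs => hU s (hJI hs), hsmooth.mono hJI, fun s hs => hhor s (hJI hs),
    fun s hs => hgeo s (hJI hs)⟩

theorem IsNhGeodesicOn.hasDerivAt_geodesicField (hγ : IsNhGeodesicOn D γ I) {s : ℝ}
    (hs : s ∈ I) :
    HasDerivAt (fun t => (γ t, deriv γ t)) (D.geodesicField (γ s, deriv γ s)) s := by
  obtain ⟨hI, hU, hsmooth, hhor, hgeo⟩ := hγ
  have hIs : I ∈ 𝓝 s := hI.mem_nhds hs
  have hγ' : HasDerivAt γ (deriv γ s) s :=
    ((hsmooth.differentiableOn (by simp)).differentiableAt hIs).hasDerivAt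
  have hsmooth' : ContDiffOn ℝ (⊤ : ℕ∞) (deriv γ) I := hsmooth.deriv_of_isOpen hI (by simp)
  have hγ'' : HasDerivAt (deriv γ) (deriv (deriv γ) s) s :=
    ((hsmooth'.differentiableOn (by simp)).differentiableAt hIs).hasDerivAt
  have hPγ' : HasDerivAt (fun t => D.P (γ t) (deriv γ t))
      (fderiv ℝ D.P (γ s) (deriv γ s) (deriv γ s) + D.P (γ s) (deriv (deriv γ) s)) s :=
    ((D.hasFDerivAt_P (hU s hs)).comp_hasDerivAt s hγ').clm_apply hγ''
  have hhor' : (fun t => D.P (γ t) (deriv γ t)) =ᶠ[𝓝 s] deriv γ :=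
    eventually_of_mem hIs hhor
  have hγ''_eq : deriv (deriv γ) s = fderiv ℝ D.P (γ s) (deriv γ s) (deriv γ s) := by
    rw [← add_zero (fderiv ℝ D.P _ _ _), ← hgeo s hs]
    exact ((hPγ'.congr_of_eventuallyEq hhor'.symm).unique hγ'').symm
  exact hγ'.prodMk (hγ''_eq ▸ hγ'')

theorem IsNhGeodesicOn.eqOn (h₁ : IsNhGeodesicOn D γ₁ I) (h₂ : IsNhGeodesicOn D γ₂ I)
    (hI : IsPreconnected I) {t₀ : ℝ} (ht₀ : t₀ ∈ I) (h : γ₁ t₀ = γ₂ t₀)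
    (h' : deriv γ₁ t₀ = deriv γ₂ t₀) : EqOn γ₁ γ₂ I := by
  have hphase := ODE_solution_eqOn_of_isPreconnected (v := fun _ => D.geodesicField)
    (f := fun t => (γ₁ t, deriv γ₁ t)) (g := fun t => (γ₂ t, deriv γ₂ t)) h₁.1 hI
    (fun t ht => by
      obtain ⟨K, s, hs, hlip⟩ :=
        (D.contDiffAt_geodesicField (z := (γ₁ t, deriv γ₁ t)) (h₁.2.1 t ht)).exists_lipschitzOnWith
      exact ⟨K, s, hs, .of_forall fun _ => hlip⟩)
    (fun _ ht => h₁.hasDerivAt_geodesicField ht) (fun _ ht => h₂.hasDerivAt_geodesicField ht)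
    ht₀ (Prod.ext h h')
  exact fun t ht => congrArg Prod.fst (hphase ht)

end Geodesics

namespace HorDistrib

variable (D : HorDistrib m k)

local notation "E" => EuclideanSpace ℝ (Fin m)

theorem exists_hasDerivAt_geodesicField {p : E} (hp : p ∈ D.U) (v : E) :
    ∃ ε > (0 : ℝ), ∃ z : ℝ → E × E, z 0 = (p, v) ∧
      ∀ t ∈ Ioo (-ε) ε, HasDerivAt z (D.geodesicField (z t)) t ∧ (z t).1 ∈ D.U := by
  obtain ⟨z, hz0, ε₀, hε₀, hz⟩ :=
    ContDiffAt.exists_forall_mem_closedBall_exists_eq_forall_mem_Ioo_hasDerivAt₀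
      (D.contDiffAt_geodesicField (z := (p, v)) hp) 0
  have hsol : ∀ᶠ t in 𝓝 0, HasDerivAt z (D.geodesicField (z t)) t :=
    eventually_of_mem (Ioo_mem_nhds (by linarith) (by linarith)) hz
  have hU : ∀ᶠ t in 𝓝 0, (z t).1 ∈ D.U := by
    refine hsol.self_of_nhds.continuousAt.preimage_mem_nhds (t := Prod.fst ⁻¹' D.U) ?_
    rw [hz0]
    exact (D.isOpen_U.preimage continuous_fst).mem_nhds hp
  obtain ⟨ε, hε, hball⟩ := Metric.eventually_nhds_iff_ball.1 (hsol.and hU)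
  refine ⟨ε, hε, z, hz0, fun t ht => hball t ?_⟩
  simpa [Real.ball_eq_Ioo] using ht

theorem horizontal_of_hasDerivAt_geodesicField {z : ℝ → E × E} {I : Set ℝ} (hIo : IsOpen I)
    (hIc : IsPreconnected I) (hz : ∀ t ∈ I, HasDerivAt z (D.geodesicField (z t)) t)
    (hU : ∀ t ∈ I, (z t).1 ∈ D.U) {t₀ : ℝ} (ht₀ : t₀ ∈ I)
    (h₀ : D.P (z t₀).1 (z t₀).2 = (z t₀).2) {t : ℝ} (ht : t ∈ I) :
    D.P (z t).1 (z t).2 = (z t).2 := by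
  set A : ℝ → E →L[ℝ] E := fun t => -((D.P (z t).1).comp (fderiv ℝ D.P (z t).1 (z t).2))
  have hzc : ContinuousOn z I := fun t ht => (hz t ht).continuousAt.continuousWithinAt
  have hA : ContinuousOn A I :=
    ((D.smooth_P.continuousOn.comp hzc.fst hU).clm_comp
      ((D.contDiffOn_fderiv_P.continuousOn.comp hzc.fst hU).clm_apply hzc.snd)).neg
  have hlin : ∀ t ∈ I, HasDerivAt (fun t => D.P (z t).1 (z t).2 - (z t).2)
      (A t (D.P (z t).1 (z t).2 - (z t).2)) t := by
    intro t ht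
    have hγ : HasDerivAt (fun t => (z t).1) (z t).2 t :=
      (hasFDerivAt_fst (p := z t)).comp_hasDerivAt t (hz t ht)
    have hw : HasDerivAt (fun t => (z t).2) (fderiv ℝ D.P (z t).1 (z t).2 (z t).2) t :=
      (hasFDerivAt_snd (p := z t)).comp_hasDerivAt t (hz t ht)
    have hPγ : HasDerivAt (fun t => D.P (z t).1) (fderiv ℝ D.P (z t).1 (z t).2) t :=
      (D.hasFDerivAt_P (hU t ht)).comp_hasDerivAt t hγ
    refine ((hPγ.clm_apply hw).sub hw).congr_deriv ?_
    have := D.P_fderiv_P_eq_zero (hU t ht) (z t).2 (z t).2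
    simp only [A, neg_apply, ContinuousLinearMap.comp_apply, map_sub, this]
    abel
  have := linear_ODE_solution_eqOn_zero hIo hIc hA hlin ht₀ (sub_eq_zero.2 h₀) ht
  exact sub_eq_zero.1 this

theorem exists_isNhGeodesicOn {p : E} (hp : p ∈ D.U) {v : E} (hv : D.P p v = v) :
    ∃ ε > (0 : ℝ), ∃ γ : ℝ → E, IsNhGeodesicOn D γ (Ioo (-ε) ε) ∧ γ 0 = p ∧ deriv γ 0 = v := by
  obtain ⟨ε, hε, z, hz0, hz⟩ := D.exists_hasDerivAt_geodesicField hp v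
  have hI0 : (0 : ℝ) ∈ Ioo (-ε) ε := ⟨neg_lt_zero.2 hε, hε⟩
  have hU : ∀ t ∈ Ioo (-ε) ε, (z t).1 ∈ D.U := fun t ht => (hz t ht).2
  have hγ' : ∀ t ∈ Ioo (-ε) ε, HasDerivAt (fun t => (z t).1) (z t).2 t := fun t ht =>
    (hasFDerivAt_fst (p := z t)).comp_hasDerivAt t (hz t ht).1
  have hw' : ∀ t ∈ Ioo (-ε) ε,
      HasDerivAt (fun t => (z t).2) (fderiv ℝ D.P (z t).1 (z t).2 (z t).2) t := fun t ht =>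
    (hasFDerivAt_snd (p := z t)).comp_hasDerivAt t (hz t ht).1
  have hhor : ∀ t ∈ Ioo (-ε) ε, D.P (z t).1 (z t).2 = (z t).2 := fun t ht =>
    D.horizontal_of_hasDerivAt_geodesicField isOpen_Ioo isPreconnected_Ioo
      (fun t ht => (hz t ht).1) hU hI0 (by simpa [hz0] using hv) ht
  have hsmooth : ContDiffOn ℝ (⊤ : ℕ∞) z (Ioo (-ε) ε) :=
    ODE_solution_contDiffOn D.contDiffOn_geodesicField isOpen_Ioo
      (fun t ht => ⟨hU t ht, mem_univ _⟩) fun t ht => (hz t ht).1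
  refine ⟨ε, hε, fun t => (z t).1, ⟨isOpen_Ioo, hU, contDiff_fst.comp_contDiffOn hsmooth,
    fun t ht => ?_, fun t ht => ?_⟩, by simp [hz0], by simp [(hγ' 0 hI0).deriv, hz0]⟩
  · rw [(hγ' t ht).deriv, hhor t ht]
  · have hderiv : deriv (fun t => (z t).1) =ᶠ[𝓝 t] fun t => (z t).2 :=
      eventually_of_mem (isOpen_Ioo.mem_nhds ht) fun t ht => (hγ' t ht).deriv
    have := D.P_fderiv_P_eq_zero (hU t ht) (z t).2 (z t).2
    rwa [hhor t ht, ← (hw' t ht).deriv, ← hderiv.deriv_eq] at this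

end HorDistrib

/-- Local existence and uniqueness of nonholonomic geodesics with prescribed
initial point `p ∈ U` and initial velocity `v ∈ Σ_p`. -/
theorem exists_unique_nonholonomic_geodesic {m k : ℕ} (D : HorDistrib m k)
    (p : EuclideanSpace ℝ (Fin m)) (hp : p ∈ D.U)
    (v : EuclideanSpace ℝ (Fin m)) (hv : v ∈ D.sigmaAt p) :
    (∃ ε > (0 : ℝ), ∃ γ : ℝ → EuclideanSpace ℝ (Fin m),
      IsNhGeodesicOn D γ (Ioo (-ε) ε) ∧ γ 0 = p ∧ deriv γ 0 = v) ∧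
    (∀ (γ₁ γ₂ : ℝ → EuclideanSpace ℝ (Fin m)) (a₁ b₁ a₂ b₂ : ℝ),
      IsNhGeodesicOn D γ₁ (Ioo a₁ b₁) → IsNhGeodesicOn D γ₂ (Ioo a₂ b₂) →
      (0 : ℝ) ∈ Ioo a₁ b₁ → (0 : ℝ) ∈ Ioo a₂ b₂ →
      γ₁ 0 = γ₂ 0 → deriv γ₁ 0 = deriv γ₂ 0 →
      ∀ s ∈ Ioo a₁ b₁ ∩ Ioo a₂ b₂, γ₁ s = γ₂ s) := by
  refine ⟨D.exists_isNhGeodesicOn hp hv, ?_⟩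
  intro γ₁ γ₂ a₁ b₁ a₂ b₂ h₁ h₂ h0₁ h0₂ h h'
  have hJ : IsPreconnected (Ioo a₁ b₁ ∩ Ioo a₂ b₂) := by
    rw [Ioo_inter_Ioo]
    exact isPreconnected_Ioo
  have hJo : IsOpen (Ioo a₁ b₁ ∩ Ioo a₂ b₂) := isOpen_Ioo.inter isOpen_Ioo
  exact (h₁.mono hJo inter_subset_left).eqOn (h₂.mono hJo inter_subset_right) hJ ⟨h0₁, h0₂⟩ h h'
end

section
/- Let f : ℍ^n → ℝ be a smooth function on the Heisenberg group. Then f is h-convex if and only if for every point p ∈ ℍ^n the 2n × 2n symmetrized horizontal Hessian matrix with entries ½(X_i X_j f + X_j X_i f)(p), i, j = 1, …, 2n, is positive semidefinite, where X_j f = ∂f/∂x_j + (y_j/2) ∂f/∂t and X_{n+j} f = ∂f/∂y_j − (x_j/2) ∂f/∂t for j = 1, …, n. -/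
open Set MeasureTheory
open scoped RealInnerProductSpace ENNReal

/-- The Heisenberg group `ℍ^n`, as the set `ℝ^n × ℝ^n × ℝ` with coordinates `(x, y, t)`. -/
abbrev Heis (n : ℕ) : Type := EuclideanSpace ℝ (Fin n) × EuclideanSpace ℝ (Fin n) × ℝ

/-- The horizontal line through `p = (x, y, t)` with direction `(a, b) ∈ ℝ^{2n}`:
`s ↦ (x + s a, y + s b, t + (s/2)(⟪y,a⟫ − ⟪x,b⟫))`. -/
noncomputable def hLine {n : ℕ} (p : Heis n) (a b : EuclideanSpace ℝ (Fin n)) (s : ℝ) :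
    Heis n :=
  (p.1 + s • a, p.2.1 + s • b, p.2.2 + (s / 2) * (⟪p.2.1, a⟫ - ⟪p.1, b⟫))

/-- `γ` is an absolutely continuous horizontal curve in `ℍ^n` on `[c,d]`, with a.e.
derivatives `u` and `v` of its `x`- and `y`-components; the `t`-component then satisfies
`t' = ½(⟪y, x'⟫ − ⟪x, y'⟫)` a.e. -/
def IsHorACHeis {n : ℕ} (γ : ℝ → Heis n) (u v : ℝ → EuclideanSpace ℝ (Fin n)) (c d : ℝ) :
    Prop :=
  c ≤ d ∧ IntegrableOn u (Icc c d) ∧ IntegrableOn v (Icc c d) ∧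
  (∀ s ∈ Icc c d, (γ s).1 = (γ c).1 + ∫ r in c..s, u r) ∧
  (∀ s ∈ Icc c d, (γ s).2.1 = (γ c).2.1 + ∫ r in c..s, v r) ∧
  (∀ s ∈ Icc c d, (γ s).2.2 = (γ c).2.2 +
    ∫ r in c..s, (1 / 2) * (⟪(γ r).2.1, u r⟫ - ⟪(γ r).1, v r⟫))

/-- The length of a horizontal curve: `∫ |(x'(s), y'(s))| ds` (Euclidean norm in `ℝ^{2n}`). -/
noncomputable def heisLength {n : ℕ} (u v : ℝ → EuclideanSpace ℝ (Fin n)) (c d : ℝ) : ℝ :=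
  ∫ s in c..d, Real.sqrt (‖u s‖ ^ 2 + ‖v s‖ ^ 2)

/-- The Carnot–Carathéodory distance on `ℍ^n`: the infimum of the lengths of horizontal
curves joining `p` to `q`. -/
noncomputable def dcHeis {n : ℕ} (p q : Heis n) : ℝ≥0∞ :=
  sInf {L | ∃ (γ : ℝ → Heis n) (u v : ℝ → EuclideanSpace ℝ (Fin n)) (c d : ℝ),
    IsHorACHeis γ u v c d ∧ γ c = p ∧ γ d = q ∧ L = ENNReal.ofReal (heisLength u v c d)}
/-- A function on the Heisenberg group is h-convex if its restriction to every horizontal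
line is convex. -/
def HConvex {n : ℕ} (f : Heis n → ℝ) : Prop :=
  ∀ (p : Heis n) (a b : EuclideanSpace ℝ (Fin n)),
    ConvexOn ℝ Set.univ fun s => f (hLine p a b s)

/-- The left-invariant horizontal vector fields of `ℍ^n` at the point `p = (x,y,t)`:
`X_j = ∂/∂x_j + (y_j/2) ∂/∂t` and `X_{n+j} = ∂/∂y_j − (x_j/2) ∂/∂t`, indexed by
`Fin n ⊕ Fin n`. -/
noncomputable def heisXfield {n : ℕ} (p : Heis n) : Fin n ⊕ Fin n → Heis n
  | Sum.inl j => (EuclideanSpace.single j 1, 0, p.2.1 j / 2)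
  | Sum.inr j => (0, EuclideanSpace.single j 1, -(p.1 j / 2))

/-- The derivative `X_i f` of `f` along the horizontal vector field `X_i`. -/
noncomputable def heisXderiv {n : ℕ} (f : Heis n → ℝ) (i : Fin n ⊕ Fin n) (q : Heis n) :
    ℝ :=
  fderiv ℝ f q (heisXfield q i)

/-!
Along the horizontal line `γ` through `p` with direction `(a, b)` the velocity is
`γ' = ∑ cᵢ Xᵢ(γ)` with `c = (a, b)`, so by the chain rule `(f ∘ γ)' = ∑ cᵢ (Xᵢ f)(γ)` and
`(f ∘ γ)'' = ∑ cᵢ cⱼ (Xⱼ Xᵢ f)(γ)`. Hence `f` is convex on every horizontal line iff this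
quadratic form is nonnegative at every point of every horizontal line, that is, at every point
and for every `c`; symmetrizing the Hessian does not change the quadratic form.
-/

theorem convexOn_univ_iff_of_hasDerivAt {g g' g'' : ℝ → ℝ}
    (hg : ∀ s, HasDerivAt g (g' s) s) (hg' : ∀ s, HasDerivAt g' (g'' s) s) :
    ConvexOn ℝ Set.univ g ↔ ∀ s, 0 ≤ g'' s := by
  have hdiff : Differentiable ℝ g := fun s => (hg s).differentiableAt
  have hderiv : deriv g = g' := funext fun s => (hg s).deriv
  constructor
  · intro hconv s
    have hmono : Monotone g' := by
      simpa [hderiv] using hconv.monotoneOn_deriv fun s _ => hdiff s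
    exact (hg' s).nonneg_of_monotone hmono
  · intro hnonneg
    have hmono : Monotone g' :=
      monotone_of_deriv_nonneg (fun s => (hg' s).differentiableAt)
        fun s => (hg' s).deriv ▸ hnonneg s
    exact Monotone.convexOn_univ_of_deriv hdiff (hderiv ▸ hmono)

theorem sum_sum_mul_half_add_mul {ι : Type*} [Fintype ι] (c : ι → ℝ) (A : ι → ι → ℝ) :
    ∑ i, ∑ j, c i * ((1 / 2) * (A j i + A i j)) * c j = ∑ i, ∑ j, c i * A i j * c j := by
  have htranspose : ∑ i, ∑ j, c i * A j i * c j = ∑ i, ∑ j, c i * A i j * c j := by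
    rw [Finset.sum_comm]
    exact Finset.sum_congr rfl fun i _ => Finset.sum_congr rfl fun j _ => by ring
  calc ∑ i, ∑ j, c i * ((1 / 2) * (A j i + A i j)) * c j
      = (1 / 2) * ∑ i, ∑ j, c i * A j i * c j + (1 / 2) * ∑ i, ∑ j, c i * A i j * c j := by
        simp only [Finset.mul_sum, ← Finset.sum_add_distrib]
        exact Finset.sum_congr rfl fun i _ => Finset.sum_congr rfl fun j _ => by ring
    _ = ∑ i, ∑ j, c i * A i j * c j := by rw [htranspose]; ring

theorem EuclideanSpace.sum_smul_single {𝕜 ι : Type*} [RCLike 𝕜] [Fintype ι] [DecidableEq ι]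
    (a : EuclideanSpace 𝕜 ι) : ∑ j, a j • EuclideanSpace.single j (1 : 𝕜) = a := by
  simpa [EuclideanSpace.basisFun_apply] using (EuclideanSpace.basisFun ι 𝕜).toBasis.sum_repr a

section Heisenberg

variable {n : ℕ}

@[simp]
theorem hLine_zero (p : Heis n) (a b : EuclideanSpace ℝ (Fin n)) : hLine p a b 0 = p := by
  simp [hLine]

theorem inner_hLine_sub_inner_hLine (p : Heis n) (a b : EuclideanSpace ℝ (Fin n)) (s : ℝ) :
    ⟪(hLine p a b s).2.1, a⟫ - ⟪(hLine p a b s).1, b⟫ = ⟪p.2.1, a⟫ - ⟪p.1, b⟫ := by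
  simp only [hLine, inner_add_left, real_inner_smul_left, real_inner_comm a b]
  ring

theorem horizontal_eq_sum_heisXfield (q : Heis n) (a b : EuclideanSpace ℝ (Fin n)) :
    ((a, b, (1 / 2) * (⟪q.2.1, a⟫ - ⟪q.1, b⟫)) : Heis n)
      = ∑ i, Sum.elim a b i • heisXfield q i := by
  rw [Fintype.sum_sum_type]
  refine Prod.ext ?_ (Prod.ext ?_ ?_)
  · simp [heisXfield, Prod.fst_sum, EuclideanSpace.sum_smul_single]
  · simp [heisXfield, Prod.snd_sum, Prod.fst_sum, EuclideanSpace.sum_smul_single]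
  · simp only [heisXfield, Sum.elim_inl, Sum.elim_inr, Prod.snd_add, Prod.snd_sum,
      Prod.smul_snd, smul_eq_mul, PiLp.inner_apply, RCLike.inner_apply, conj_trivial]
    rw [mul_sub, Finset.mul_sum, Finset.mul_sum, sub_eq_add_neg, ← Finset.sum_neg_distrib]
    congr 1 <;> exact Finset.sum_congr rfl fun i _ => by ring

theorem hasDerivAt_hLine (p : Heis n) (a b : EuclideanSpace ℝ (Fin n)) (s : ℝ) :
    HasDerivAt (hLine p a b) (∑ i, Sum.elim a b i • heisXfield (hLine p a b s) i) s := by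
  have hx : HasDerivAt (fun s : ℝ => p.1 + s • a) a s := by
    simpa using ((hasDerivAt_id s).smul_const a).const_add p.1
  have hy : HasDerivAt (fun s : ℝ => p.2.1 + s • b) b s := by
    simpa using ((hasDerivAt_id s).smul_const b).const_add p.2.1
  have ht : HasDerivAt (fun s : ℝ => p.2.2 + (s / 2) * (⟪p.2.1, a⟫ - ⟪p.1, b⟫))
      ((1 / 2) * (⟪p.2.1, a⟫ - ⟪p.1, b⟫)) s := by
    simpa using (((hasDerivAt_id s).div_const 2).mul_const _).const_add p.2.2
  rw [← horizontal_eq_sum_heisXfield, inner_hLine_sub_inner_hLine]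
  exact hx.prodMk (hy.prodMk ht)

theorem hasDerivAt_comp_hLine {g : Heis n → ℝ} {p : Heis n} {a b : EuclideanSpace ℝ (Fin n)}
    {s : ℝ} (hg : DifferentiableAt ℝ g (hLine p a b s)) :
    HasDerivAt (fun s => g (hLine p a b s))
      (∑ i, Sum.elim a b i * heisXderiv g i (hLine p a b s)) s := by
  have h := hg.hasFDerivAt.comp_hasDerivAt s (hasDerivAt_hLine p a b s)
  simp only [map_sum, map_smul, smul_eq_mul] at h
  exact h

theorem contDiff_heisXfield {k : WithTop ℕ∞} (i : Fin n ⊕ Fin n) :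
    ContDiff ℝ k (fun q : Heis n => heisXfield q i) := by
  have hproj (j : Fin n) : ContDiff ℝ k fun x : EuclideanSpace ℝ (Fin n) => x j :=
    (EuclideanSpace.proj j : EuclideanSpace ℝ (Fin n) →L[ℝ] ℝ).contDiff
  cases i with
  | inl j =>
    exact contDiff_const.prodMk <| contDiff_const.prodMk <|
      ((hproj j).comp (contDiff_fst.comp contDiff_snd)).div_const 2
  | inr j =>
    exact contDiff_const.prodMk <| contDiff_const.prodMk <|
      (((hproj j).comp contDiff_fst).div_const 2).neg

theorem ContDiff.heisXderiv {k : WithTop ℕ∞} {f : Heis n → ℝ} (hf : ContDiff ℝ (k + 1) f)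
    (i : Fin n ⊕ Fin n) : ContDiff ℝ k (heisXderiv f i) :=
  (hf.fderiv_right le_rfl).clm_apply (contDiff_heisXfield i)

theorem convexOn_comp_hLine_iff {f : Heis n → ℝ} (hf : ContDiff ℝ 2 f) (p : Heis n)
    (a b : EuclideanSpace ℝ (Fin n)) :
    ConvexOn ℝ Set.univ (fun s => f (hLine p a b s)) ↔ ∀ s, 0 ≤ ∑ i, ∑ j,
      Sum.elim a b i * heisXderiv (heisXderiv f i) j (hLine p a b s) * Sum.elim a b j := by
  have hXf (i : Fin n ⊕ Fin n) : Differentiable ℝ (heisXderiv f i) :=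
    (hf.heisXderiv i).differentiable one_ne_zero
  refine convexOn_univ_iff_of_hasDerivAt
    (fun s => hasDerivAt_comp_hLine (hf.differentiable two_ne_zero _)) fun s => ?_
  refine (HasDerivAt.fun_sum fun i _ =>
    (hasDerivAt_comp_hLine (hXf i _)).const_mul (Sum.elim a b i)).congr_deriv ?_
  exact Finset.sum_congr rfl fun i _ => by
    rw [Finset.mul_sum]
    exact Finset.sum_congr rfl fun j _ => by ring

end Heisenberg

/-- A smooth function on `ℍ^n` is h-convex iff its symmetrized horizontal
Hessian `½(X_i X_j f + X_j X_i f)` is positive semidefinite at every point. -/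
theorem heisenberg_hconvex_iff_hessian_psd {n : ℕ} (f : Heis n → ℝ)
    (hf : ContDiff ℝ (⊤ : ℕ∞) f) :
    HConvex f ↔
      ∀ (p : Heis n) (c : Fin n ⊕ Fin n → ℝ),
        0 ≤ ∑ i : Fin n ⊕ Fin n, ∑ j : Fin n ⊕ Fin n,
          c i * ((1 / 2) * (fderiv ℝ (heisXderiv f j) p (heisXfield p i) +
            fderiv ℝ (heisXderiv f i) p (heisXfield p j))) * c j := by
  have hf2 : ContDiff ℝ 2 f := hf.of_le (WithTop.coe_le_coe.2 le_top)
  have hsymm (p : Heis n) (c : Fin n ⊕ Fin n → ℝ) := sum_sum_mul_half_add_mul c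
    fun i j => fderiv ℝ (heisXderiv f i) p (heisXfield p j)
  constructor
  · intro hconv p c
    obtain ⟨a, b, rfl⟩ : ∃ a b : EuclideanSpace ℝ (Fin n), Sum.elim a b = c :=
      ⟨WithLp.toLp 2 (c ∘ Sum.inl), WithLp.toLp 2 (c ∘ Sum.inr), Sum.elim_comp_inl_inr c⟩
    have h := (convexOn_comp_hLine_iff hf2 p a b).1 (hconv p a b) 0
    rw [hLine_zero] at h
    rwa [hsymm]
  · intro hpsd p a b
    refine (convexOn_comp_hLine_iff hf2 p a b).2 fun s => ?_
    have h := hpsd (hLine p a b s) (Sum.elim a b)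
    rwa [hsymm] at h
end
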